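/- arXiv:2501.15170 — 2 statements merged into one kernel-verified Lean document; each statement's English description precedes it below -/
import Mathlib

section
/- Let {a_1 mod d_1, ..., a_t mod d_t} be a CD congruence set. Then for every integer m > 1, the number of indices i in any subset S ⊆ {1, ..., t} such that gcd(d_i, d_j) = m for all distinct i, j ∈ S is at most m; that is, at most m of the moduli can have pairwise gcd equal to m. -/
/-!
Two congruences `a mod n` and `b mod m` overlap as soon as `a ≡ b` modulo `gcd n m` (Bézout).
So if the moduli of `i ≠ j ∈ S` have gcd `m > 1`, the CD property forces `a i ≢ a j (mod m)`:
the residues of the `a i` modulo `m` are pairwise distinct, and there are only `m` of them.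
-/

theorem Int.exists_modEq_and_modEq_of_modEq_gcd {n m a b : ℤ}
    (h : a ≡ b [ZMOD (Int.gcd n m : ℤ)]) : ∃ x, x ≡ a [ZMOD n] ∧ x ≡ b [ZMOD m] := by
  obtain ⟨k, hk⟩ := Int.modEq_iff_dvd.mp h
  refine ⟨a + k * (n * Int.gcdA n m), ?_, ?_⟩
  · exact Int.modEq_iff_dvd.mpr ⟨-(k * Int.gcdA n m), by ring⟩
  · refine Int.modEq_iff_dvd.mpr ⟨k * Int.gcdB n m, ?_⟩
    linear_combination hk + k * Int.gcd_eq_gcd_ab n m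

theorem CD_pairwise_gcd_card_le_general (t : ℕ) (d : Fin t → ℕ) (a : Fin t → ℤ)
    (hCD : ∀ i j : Fin t, i ≠ j →
      (∃ x : ℤ, x ≡ a i [ZMOD (d i : ℤ)] ∧ x ≡ a j [ZMOD (d j : ℤ)]) →
      Nat.gcd (d i) (d j) = 1)
    (m : ℕ) (hm : 1 < m) (S : Finset (Fin t))
    (hS : ∀ i ∈ S, ∀ j ∈ S, i ≠ j → Nat.gcd (d i) (d j) = m) :
    S.card ≤ m := by
  have : NeZero m := ⟨by omega⟩
  have residues_injOn : Set.InjOn (fun i => (a i : ZMod m)) S := by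
    intro i hi j hj hij
    by_contra hne
    have hgcd := hS i hi j hj hne
    have hmod : a i ≡ a j [ZMOD (Int.gcd (d i) (d j) : ℤ)] := by
      rw [Int.gcd_natCast_natCast, hgcd]
      exact (ZMod.intCast_eq_intCast_iff _ _ _).mp hij
    have := hCD i j hne (Int.exists_modEq_and_modEq_of_modEq_gcd hmod)
    omega
  calc S.card ≤ (Finset.univ : Finset (ZMod m)).card :=
        Finset.card_le_card_of_injOn _ (fun _ _ => Finset.mem_univ _) residues_injOn
    _ = m := by rw [Finset.card_univ, ZMod.card]

/-- In a CD congruence set `{a i mod d i : i < t}`, for every integer `m > 1`, any set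
`S` of indices whose moduli have pairwise gcd equal to `m` has size at most `m`. -/
theorem CD_pairwise_gcd_card_le (t : ℕ) (d : Fin t → ℕ) (a : Fin t → ℤ)
    (hd : ∀ i, 1 < d i) (hinj : Function.Injective d)
    (hCD : ∀ i j : Fin t, i ≠ j →
      (∃ x : ℤ, x ≡ a i [ZMOD (d i : ℤ)] ∧ x ≡ a j [ZMOD (d j : ℤ)]) →
      Nat.gcd (d i) (d j) = 1)
    (m : ℕ) (hm : 1 < m) (S : Finset (Fin t))
    (hS : ∀ i ∈ S, ∀ j ∈ S, i ≠ j → Nat.gcd (d i) (d j) = m) :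
    S.card ≤ m :=
  CD_pairwise_gcd_card_le_general t d a hCD m hm S hS
end

section
/- Let n > 1 be non-intersecting, let p be the smallest prime dividing n, and let q_1, ..., q_p be distinct primes each dividing n/p. Then for any choice of residues a_d making {a_d mod d : d | n, d > 1} a CD congruence set, there exist indices i ≠ j with a_{p·q_i} ≡ a_{p·q_j} (mod p). (This is the pigeonhole step: if all a_{p·q_i} mod p were distinct for 1 ≤ i ≤ p, one would coincide with a_p mod p, contradicting the CD property.) -/
/-- `{a d mod d : d ∣ n, 1 < d}` is a CD congruence set. -/
def IsCoprimeDisjoint (n : ℕ) (a : ℕ → ℤ) : Prop :=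
  ∀ d d' : ℕ, d ∣ n → d' ∣ n → 1 < d → 1 < d' → d ≠ d' →
    (∃ x : ℤ, x ≡ a d [ZMOD (d : ℤ)] ∧ x ≡ a d' [ZMOD (d' : ℤ)]) → Nat.gcd d d' = 1

theorem Int.exists_ne_modEq_of_forall_not_modEq {m : ℕ} (hm : m ≠ 0) (f : Fin m → ℤ) (b : ℤ)
    (hb : ∀ i, ¬ f i ≡ b [ZMOD m]) : ∃ i j, i ≠ j ∧ f i ≡ f j [ZMOD m] := by
  have : NeZero m := ⟨hm⟩
  have hmaps : ∀ i ∈ (Finset.univ : Finset (Fin m)),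
      ((f i : ZMod m)) ∈ (Finset.univ : Finset (ZMod m)).erase (b : ZMod m) := fun i _ =>
    Finset.mem_erase.mpr ⟨fun h => hb i ((ZMod.intCast_eq_intCast_iff _ _ _).mp h),
      Finset.mem_univ _⟩
  have hcard : ((Finset.univ : Finset (ZMod m)).erase (b : ZMod m)).card <
      (Finset.univ : Finset (Fin m)).card := by
    simp [Finset.card_erase_of_mem, ZMod.card, Nat.pos_of_ne_zero hm]
  obtain ⟨i, -, j, -, hij, hfij⟩ := Finset.exists_ne_map_eq_of_card_lt_of_maps_to hcard hmaps
  exact ⟨i, j, hij, (ZMod.intCast_eq_intCast_iff _ _ _).mp hfij⟩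

theorem IsCoprimeDisjoint.not_modEq_of_dvd {n : ℕ} {a : ℕ → ℤ} (h : IsCoprimeDisjoint n a)
    {d d' : ℕ} (hd'n : d' ∣ n) (hdd' : d ∣ d') (hd : 1 < d) (hlt : d < d') :
    ¬ a d' ≡ a d [ZMOD d] := fun hmod => by
  have hgcd := h d d' (hdd'.trans hd'n) hd'n hd (hd.trans hlt) hlt.ne ⟨a d', hmod, rfl⟩
  rw [Nat.gcd_eq_left hdd'] at hgcd
  omega

theorem pigeonhole_step_general (n : ℕ) (hn : 1 < n) (a : ℕ → ℤ)
    (hCD : ∀ d d' : ℕ, d ∣ n → d' ∣ n → 1 < d → 1 < d' → d ≠ d' →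
      (∃ x : ℤ, x ≡ a d [ZMOD (d : ℤ)] ∧ x ≡ a d' [ZMOD (d' : ℤ)]) →
      Nat.gcd d d' = 1)
    (q : Fin n.minFac → ℕ) (hq : ∀ i, (q i).Prime)
    (hqdvd : ∀ i, q i ∣ n / n.minFac) :
    ∃ i j : Fin n.minFac, i ≠ j ∧
      a (n.minFac * q i) ≡ a (n.minFac * q j) [ZMOD (n.minFac : ℤ)] := by
  have hp : n.minFac.Prime := Nat.minFac_prime hn.ne'
  refine Int.exists_ne_modEq_of_forall_not_modEq hp.ne_zero _ (a n.minFac) fun i => ?_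
  exact IsCoprimeDisjoint.not_modEq_of_dvd hCD
    (Nat.mul_dvd_of_dvd_div (Nat.minFac_dvd n) (hqdvd i)) (dvd_mul_right _ _) hp.one_lt
    (lt_mul_of_one_lt_right hp.pos (hq i).one_lt)

/-- Let `n > 1` be non-intersecting via residues `a d` (so `{a d mod d : d ∣ n, d > 1}` is
a CD congruence set), let `p = n.minFac` be the smallest prime dividing `n`, and let
`q 1, …, q p` be distinct primes each dividing `n / p`. Then there exist indices `i ≠ j`
with `a (p * q i) ≡ a (p * q j) (mod p)`. -/
theorem pigeonhole_step (n : ℕ) (hn : 1 < n) (a : ℕ → ℤ)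
    (hCD : ∀ d d' : ℕ, d ∣ n → d' ∣ n → 1 < d → 1 < d' → d ≠ d' →
      (∃ x : ℤ, x ≡ a d [ZMOD (d : ℤ)] ∧ x ≡ a d' [ZMOD (d' : ℤ)]) →
      Nat.gcd d d' = 1)
    (q : Fin n.minFac → ℕ) (hq : ∀ i, (q i).Prime) (hqinj : Function.Injective q)
    (hqdvd : ∀ i, q i ∣ n / n.minFac) :
    ∃ i j : Fin n.minFac, i ≠ j ∧
      a (n.minFac * q i) ≡ a (n.minFac * q j) [ZMOD (n.minFac : ℤ)] :=
  pigeonhole_step_general n hn a hCD q hq hqdvd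
end
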